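/- Let f = Σ_{i≥0} a_i x^i ∈ K⦃x⦄ be SP. Then f has a zero in O_K if and only if |a_0| ≤ |f|_SP (equivalently, |a_0| ≤ |a_1|). -/

import Mathlib

open MeasureTheory Filter
open scoped NNReal ENNReal Classical

namespace VdC

variable {K : Type*} [NontriviallyNormedField K]

/-! ### One-variable convergent power series over a non-archimedean local field -/

/-- Evaluation of a one-variable power series (given by its coefficients) at a point. -/
noncomputable def pseval (a : ℕ → K) (x : K) : K := ∑' i, a i * x ^ i

/-- Membership in `K⦃x⦄`: the coefficients tend to `0`, i.e. convergence on `O_K`. -/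
def IsConvergent (a : ℕ → K) : Prop := Tendsto (fun i => ‖a i‖) atTop (nhds 0)

/-- Gauss norm of a power series. -/
noncomputable def gaussNorm (a : ℕ → K) : ℝ := ⨆ i, ‖a i‖

/-- Coefficients of `f - f(0)`. -/
def tail (a : ℕ → K) : ℕ → K := fun i => if i = 0 then 0 else a i

/-- SP power series: `a 1 ≠ 0` and `a j ∈ a 1 • M_K` for all `j > 1`;
`‖a 1‖` is then the SP-norm `|f|_SP`. -/
def IsSP (a : ℕ → K) : Prop := a 1 ≠ 0 ∧ ∀ j, 1 < j → ‖a j‖ < ‖a 1‖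

/-- Coefficients of `f_{b,c}(t) = (1/c) ⬝ f (b + c t)`. -/
noncomputable def shiftCoeff (a : ℕ → K) (b c : K) : ℕ → K :=
  fun j => c⁻¹ * c ^ j * ∑' m : ℕ, ((m + j).choose j : K) * a (m + j) * b ^ m

/-- `SPAt q a r` says: for all nonzero `c ∈ M_K ^ r` and all `b ∈ O_K`, the power series
`f_{b,c}` is SP.  (Here `c ∈ M_K ^ r` iff `‖c‖ ≤ q⁻¹ ^ r`.)  The SP-number of `f` is the
least `r` with this property, i.e. `IsLeast {r | SPAt q a r} r`. -/
def SPAt (q : ℕ) (a : ℕ → K) (r : ℕ) : Prop :=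
  ∀ b c : K, ‖b‖ ≤ 1 → c ≠ 0 → ‖c‖ ≤ (q : ℝ)⁻¹ ^ r → IsSP (shiftCoeff a b c)

/-- Coefficients of the derivative of a power series; `dcoeff^[k] a` gives `f^{(k)}`. -/
def dcoeff (a : ℕ → K) : ℕ → K := fun j => ((j + 1 : ℕ) : K) * a (j + 1)

/-- `K` is a non-archimedean local field whose residue field has `q` elements, the norm
being normalized so that a uniformizer `π_K` has norm `q⁻¹`. -/
structure IsLocalField (K : Type*) [NontriviallyNormedField K] (q : ℕ) : Prop where
  nonarch : IsNonarchimedean (norm : K → ℝ)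
  one_lt : 1 < q
  complete : CompleteSpace K
  exists_unif : ∃ π : K, ‖π‖ = (q : ℝ)⁻¹
  discrete : ∀ x : K, x ≠ 0 → ∃ m : ℤ, ‖x‖ = (q : ℝ) ^ m
  residue : ∃ T : Finset K, T.card = q ∧ (∀ t ∈ T, ‖t‖ ≤ 1) ∧
      ∀ x : K, ‖x‖ ≤ 1 → ∃! t, t ∈ T ∧ ‖x - t‖ < 1

/-- `ψ` is an additive character on `K`, trivial on `M_K` and nontrivial on `O_K`. -/
structure IsAddChar (ψ : K → ℂ) : Prop where
  cont : Continuous ψ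
  map_add : ∀ x y, ψ (x + y) = ψ x * ψ y
  norm_eq : ∀ x, ‖ψ x‖ = 1
  triv : ∀ x : K, ‖x‖ < 1 → ψ x = 1
  nontriv : ∃ x : K, ‖x‖ ≤ 1 ∧ ψ x ≠ 1

/-- The characteristic of `K` is zero or larger than `k`. -/
def CharCond (K : Type*) [NontriviallyNormedField K] (k : ℕ) : Prop :=
  ∀ m : ℕ, m ≤ k → (m : K) = 0 → m = 0

/-- `p` is the residue characteristic of `K` (so `q = p ^ f` is the residue cardinality)
and `e = ord (p_K)` is the ramification degree of `K`, i.e. `‖p‖ = q ^ (-e)`. -/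
def IsResidueData (K : Type*) [NontriviallyNormedField K] (q p e : ℕ) : Prop :=
  p.Prime ∧ (∃ f : ℕ, 0 < f ∧ q = p ^ f) ∧ 0 < e ∧ ‖(p : K)‖ = (q : ℝ)⁻¹ ^ e

/-- `f` is (Weierstrass) regular of degree `d`: it lies in `O_K⦃x⦄` and is congruent to
a monic polynomial of degree `d` modulo `π_K ⬝ O_K⦃x⦄`. -/
def IsRegularOfDeg (a : ℕ → K) (d : ℕ) : Prop :=
  (∀ i, ‖a i‖ ≤ 1) ∧ ‖a d - 1‖ < 1 ∧ ∀ i, d < i → ‖a i‖ < 1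

/-! ### Several variables -/

/-- Evaluation of a power series in `n` variables at a point. -/
noncomputable def mpseval {n : ℕ} (a : (Fin n → ℕ) → K) (x : Fin n → K) : K :=
  ∑' i : Fin n → ℕ, a i * ∏ j, x j ^ i j

/-- Membership in `K⦃x_1,…,x_n⦄`: `‖a i‖ → 0` as `|i| → ∞`. -/
def MIsConvergent {n : ℕ} (a : (Fin n → ℕ) → K) : Prop :=
  Tendsto (fun i => ‖a i‖) cofinite (nhds 0)

/-- Gauss norm of a multivariate power series. -/
noncomputable def mgauss {n : ℕ} (a : (Fin n → ℕ) → K) : ℝ := ⨆ i, ‖a i‖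

/-- Coefficients of `f - f(0)`. -/
def mtail {n : ℕ} (a : (Fin n → ℕ) → K) : (Fin n → ℕ) → K :=
  fun i => if i = 0 then 0 else a i

/-- Coefficients of the partial derivative `∂^α f` of a multivariate power series `f`. -/
noncomputable def mpderiv {n : ℕ} (a : (Fin n → ℕ) → K) (α : Fin n → ℕ) :
    (Fin n → ℕ) → K :=
  fun i => ((∏ j, (i j + α j).descFactorial (α j) : ℕ) : K) * a (fun j => i j + α j)

/-- The unit polydisc `O_K ^ n`. -/
def polydisc (K : Type*) [NontriviallyNormedField K] (n : ℕ) : Set (Fin n → K) :=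
  {x | ∀ i, ‖x i‖ ≤ 1}

/-! ### `K`-analytic manifolds with isometric charts, type conditions, induced measures -/

/-- An isometric analytic chart of the `d`-dimensional manifold `M ⊆ K^n` centered at
`x0 ∈ M`: `ι` selects the `d` coordinates of the coordinate projection `p : x ↦ x ∘ ι`,
and the inverse of `p` is given by the `n` convergent power series `F i`, parametrizing
`M ∩ {x : ‖x - x0‖ ≤ ‖c‖}` isometrically by the polydisc `x0 + (c O_K)^d`. -/
def IsChartAt {n : ℕ} (d : ℕ) (M : Set (Fin n → K)) (x0 : Fin n → K)
    (ι : Fin d → Fin n) (c : K) (F : Fin n → (Fin d → ℕ) → K) : Prop :=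
  Function.Injective ι ∧ c ≠ 0 ∧ (∀ i, MIsConvergent (F i)) ∧
  (∀ i, mpseval (F i) 0 = x0 i) ∧
  (∀ z : Fin d → K, z ∈ polydisc K d → ∀ j, mpseval (F (ι j)) z = x0 (ι j) + c * z j) ∧
  (∀ z z' : Fin d → K, z ∈ polydisc K d → z' ∈ polydisc K d →
      ∀ i, ‖mpseval (F i) z - mpseval (F i) z'‖ ≤ ‖c‖ * (⨆ j, ‖z j - z' j‖)) ∧
  ((fun z : Fin d → K => fun i => mpseval (F i) z) '' polydisc K d
      = M ∩ {x | ∀ i, ‖x i - x0 i‖ ≤ ‖c‖})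

/-- `M ⊆ K^n` is a `d`-dimensional `K`-analytic manifold (with isometric charts). -/
def IsManifold {n : ℕ} (d : ℕ) (M : Set (Fin n → K)) : Prop :=
  ∀ x0 ∈ M, ∃ ι c F, IsChartAt d M x0 ι c F

/-- `M` is of type at most `k` at the point `x0`: for some analytic chart `f = (F i)_i`
centered at `x0` and each nonzero `v ∈ K^n` there is a multi-index `α` with
`0 < |α| ≤ k` and `v ⬝ (∂^α f)(x0) ≠ 0`. -/
def TypeAtMost {n : ℕ} (d : ℕ) (M : Set (Fin n → K)) (x0 : Fin n → K) (k : ℕ) : Prop :=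
  ∃ ι c F, IsChartAt d M x0 ι c F ∧
    ∀ v : Fin n → K, v ≠ 0 → ∃ α : Fin d → ℕ, 0 < (∑ j, α j) ∧ (∑ j, α j) ≤ k ∧
      (∑ i, v i * mpseval (mpderiv (F i) α) 0) ≠ 0

/-- `M` is of type `k`: of type at most `k` at each of its points, `k` least such. -/
def IsOfType {n : ℕ} (d : ℕ) (M : Set (Fin n → K)) (k : ℕ) : Prop :=
  0 < k ∧ (∀ x ∈ M, TypeAtMost d M x k) ∧
    ∀ k', (∀ x ∈ M, TypeAtMost d M x k') → k ≤ k'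

/-- `μS` is the measure on the manifold `S ⊆ K^n` induced, via the isometric charts
of `S` (namely the coordinate projections `x ↦ x ∘ ι`), from the Haar measure `lamd` on
`K^d` normalized so that `O_K^d` has measure `1`. -/
def IsInducedMeasure [MeasurableSpace K] {n : ℕ} (d : ℕ) (S : Set (Fin n → K))
    (μS : Measure (Fin n → K)) (lamd : Measure (Fin d → K)) : Prop :=
  μS {x | x ∉ S} = 0 ∧
  ∀ x0 ∈ S, ∀ ι c F, IsChartAt d S x0 ι c F →
    ∀ A : Set (Fin n → K), MeasurableSet A → A ⊆ S ∩ {x | ∀ i, ‖x i - x0 i‖ ≤ ‖c‖} →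
      μS A = lamd ((fun x : Fin n → K => x ∘ ι) '' A)

/-! ### Maximal function and Riesz kernel on `K^n` -/

/-- The Hardy–Littlewood maximal function on `K^n`, where the balls are the sets
`a + b ⬝ O_K^n` with `b ≠ 0`. -/
noncomputable def maximalFn [MeasurableSpace K] {n : ℕ} (μ : Measure (Fin n → K))
    (f : (Fin n → K) → ℂ) (x : Fin n → K) : ℝ :=
  sSup {r : ℝ | ∃ (a : Fin n → K) (b : K), b ≠ 0 ∧ (∀ i, ‖x i - a i‖ ≤ ‖b‖) ∧
    r = (μ {y | ∀ i, ‖y i - a i‖ ≤ ‖b‖}).toReal⁻¹ *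
      ∫ y in {y : Fin n → K | ∀ i, ‖y i - a i‖ ≤ ‖b‖}, ‖f y‖ ∂μ}

/-- The kernel `y ↦ |y|^{-γ}` on `K^n`, extended by `0` at `0`. -/
noncomputable def rieszKernel {n : ℕ} (γ : ℝ) (y : Fin n → K) : ℂ :=
  if y = 0 then 0 else ((‖y‖ ^ (-γ) : ℝ) : ℂ)

end VdC

/-!
Since `a_j → 0` and `‖a_j‖ < ‖a₁‖` for `j > 1`, some `r < ‖a₁‖` bounds all `‖a_j‖`, `j > 1`.
By the ultrametric inequality, `f x - f y - a₁ (x - y)` then has norm at most `r ‖x - y‖`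
on `O_K`. So a zero `d` gives `‖a₀ + a₁ d‖ = ‖f 0 - f d - a₁ (0 - d)‖ ≤ ‖a₁‖`, whence
`‖a₀‖ ≤ ‖a₁‖`. Conversely, if `‖a₀‖ ≤ ‖a₁‖` then `x ↦ x - f x / a₁` maps `O_K` into itself
and contracts it with ratio `r / ‖a₁‖ < 1`; its fixed point is a zero of `f`.
-/

namespace VdC

open Set Metric

lemma exists_lt_forall_le_of_tendsto_zero {ι : Type*} {g : ι → ℝ}
    (hg : Tendsto g cofinite (nhds 0)) {c : ℝ} (hc : 0 < c) (hgc : ∀ i, g i < c) :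
    ∃ r < c, ∀ i, g i ≤ r := by
  obtain ⟨r, hr, hmax⟩ :=
    hg.isCompact_insert_range_of_cofinite.exists_isGreatest (insert_nonempty _ _)
  refine ⟨r, ?_, fun i => hmax (mem_insert_of_mem _ (mem_range_self i))⟩
  rcases hr with rfl | ⟨i, rfl⟩
  exacts [hc, hgc i]

section

variable {K : Type*} [NontriviallyNormedField K] {a : ℕ → K}

lemma pseval_zero : pseval a 0 = a 0 := by
  rw [pseval, tsum_eq_single 0 fun i hi => by simp [hi]]
  simp

lemma IsSP.exists_lt_forall_norm_le (hsp : IsSP a) (ha : IsConvergent a) :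
    ∃ r < ‖a 1‖, ∀ i, 1 < i → ‖a i‖ ≤ r := by
  have htail : Tendsto (fun j => ‖a (j + 2)‖) cofinite (nhds 0) := by
    rw [Nat.cofinite_eq_atTop]
    exact ha.comp (tendsto_add_atTop_nat 2)
  obtain ⟨r, hr1, hr⟩ := exists_lt_forall_le_of_tendsto_zero htail (norm_pos_iff.2 hsp.1)
    fun j => hsp.2 (j + 2) (by omega)
  refine ⟨r, hr1, fun i hi => ?_⟩
  obtain ⟨j, rfl⟩ : ∃ j, i = j + 2 := ⟨i - 2, by omega⟩
  exact hr j

variable [IsUltrametricDist K]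

lemma norm_pow_sub_pow_le {x y : K} (hx : ‖x‖ ≤ 1) (hy : ‖y‖ ≤ 1) (n : ℕ) :
    ‖x ^ n - y ^ n‖ ≤ ‖x - y‖ := by
  rw [← geom_sum₂_mul, norm_mul]
  refine mul_le_of_le_one_left (norm_nonneg _) <|
    IsUltrametricDist.norm_sum_le_of_forall_le_of_nonneg zero_le_one fun i _ => ?_
  rw [norm_mul, norm_pow, norm_pow]
  exact mul_le_one₀ (pow_le_one₀ (norm_nonneg _) hx) (by positivity)
    (pow_le_one₀ (norm_nonneg _) hy)

variable [CompleteSpace K]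

lemma IsConvergent.summable_mul_pow (ha : IsConvergent a) {x : K} (hx : ‖x‖ ≤ 1) :
    Summable fun i => a i * x ^ i := by
  refine NonarchimedeanAddGroup.summable_of_tendsto_cofinite_zero ?_
  rw [Nat.cofinite_eq_atTop, tendsto_zero_iff_norm_tendsto_zero]
  refine squeeze_zero (fun _ => norm_nonneg _) (fun i => ?_) ha
  rw [norm_mul, norm_pow]
  exact mul_le_of_le_one_right (norm_nonneg _) (pow_le_one₀ (norm_nonneg _) hx)

lemma IsConvergent.norm_pseval_sub_pseval_sub_le (ha : IsConvergent a) {x y : K}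
    (hx : ‖x‖ ≤ 1) (hy : ‖y‖ ≤ 1) {r : ℝ} (hr0 : 0 ≤ r) (hr : ∀ i, 1 < i → ‖a i‖ ≤ r) :
    ‖pseval a x - pseval a y - a 1 * (x - y)‖ ≤ r * ‖x - y‖ := by
  have hsx := ha.summable_mul_pow hx
  have hsy := ha.summable_mul_pow hy
  have hdiff : pseval a x - pseval a y - a 1 * (x - y) =
      ∑' i, (a i * (x ^ i - y ^ i) - if i = 1 then a 1 * (x - y) else 0) := by
    rw [Summable.tsum_sub _ (hasSum_ite_eq 1 _).summable, tsum_ite_eq, pseval, pseval,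
      ← hsx.tsum_sub hsy]
    · simp only [mul_sub]
    · simpa only [mul_sub] using hsx.sub hsy
  rw [hdiff]
  refine IsUltrametricDist.norm_tsum_le_of_forall_le_of_nonneg (by positivity) fun i => ?_
  rcases lt_trichotomy i 1 with h | rfl | h
  · simp [Nat.lt_one_iff.1 h, mul_nonneg hr0 (norm_nonneg _)]
  · simp [mul_nonneg hr0 (norm_nonneg _)]
  · rw [if_neg h.ne', sub_zero, norm_mul]
    exact mul_le_mul (hr i h) (norm_pow_sub_pow_le hx hy i) (norm_nonneg _) hr0

lemma IsConvergent.norm_sub_inv_mul_pseval_sub_le (ha : IsConvergent a) (ha1 : a 1 ≠ 0)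
    {x y : K} (hx : ‖x‖ ≤ 1) (hy : ‖y‖ ≤ 1) {r : ℝ} (hr0 : 0 ≤ r)
    (hr : ∀ i, 1 < i → ‖a i‖ ≤ r) :
    ‖(x - (a 1)⁻¹ * pseval a x) - (y - (a 1)⁻¹ * pseval a y)‖ ≤ r / ‖a 1‖ * ‖x - y‖ := by
  have hxy : (x - (a 1)⁻¹ * pseval a x) - (y - (a 1)⁻¹ * pseval a y) =
      -((a 1)⁻¹ * (pseval a x - pseval a y - a 1 * (x - y))) := by
    field_simp
    ring
  rw [hxy, norm_neg, norm_mul, norm_inv, div_eq_inv_mul, mul_assoc]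
  gcongr
  exact ha.norm_pseval_sub_pseval_sub_le hx hy hr0 hr

theorem IsSP.norm_coeff_zero_le_of_pseval_eq_zero (hsp : IsSP a) (ha : IsConvergent a)
    {d : K} (hd : ‖d‖ ≤ 1) (hfd : pseval a d = 0) : ‖a 0‖ ≤ ‖a 1‖ := by
  have hbound := ha.norm_pseval_sub_pseval_sub_le (norm_zero.trans_le zero_le_one) hd
    (norm_nonneg (a 1)) fun i hi => (hsp.2 i hi).le
  rw [pseval_zero, hfd, sub_zero, zero_sub, mul_neg, sub_neg_eq_add] at hbound
  have hd' : ‖a 1 * d‖ ≤ ‖a 1‖ := by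
    rw [norm_mul]
    exact mul_le_of_le_one_right (norm_nonneg _) hd
  calc ‖a 0‖ = ‖(a 0 + a 1 * d) + -(a 1 * d)‖ := by rw [add_neg_cancel_right]
    _ ≤ max ‖a 0 + a 1 * d‖ ‖-(a 1 * d)‖ := IsUltrametricDist.norm_add_le_max _ _
    _ ≤ ‖a 1‖ := max_le (hbound.trans (by simpa using hd')) (by rwa [norm_neg])

theorem IsSP.exists_pseval_eq_zero (hsp : IsSP a) (ha : IsConvergent a)
    (h0 : ‖a 0‖ ≤ ‖a 1‖) : ∃ d : K, ‖d‖ ≤ 1 ∧ pseval a d = 0 := by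
  obtain ⟨r, hr1, hr⟩ := hsp.exists_lt_forall_norm_le ha
  have hr0 : 0 ≤ r := (norm_nonneg _).trans (hr 2 one_lt_two)
  have ha1 : 0 < ‖a 1‖ := norm_pos_iff.2 hsp.1
  let T : K → K := fun x => x - (a 1)⁻¹ * pseval a x
  let κ : ℝ≥0 := ⟨r / ‖a 1‖, div_nonneg hr0 ha1.le⟩
  have hκ_coe : (κ : ℝ) = r / ‖a 1‖ := rfl
  have hκ : κ < 1 := by
    rw [← NNReal.coe_lt_coe, hκ_coe, NNReal.coe_one, div_lt_one ha1]
    exact hr1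
  have hT_lip : ∀ x y : K, ‖x‖ ≤ 1 → ‖y‖ ≤ 1 → ‖T x - T y‖ ≤ κ * ‖x - y‖ := fun x y hx hy =>
    hκ_coe ▸ ha.norm_sub_inv_mul_pseval_sub_le hsp.1 hx hy hr0 hr
  have hT_maps : MapsTo T (closedBall 0 1) (closedBall 0 1) := by
    intro x hx
    rw [mem_closedBall_zero_iff] at hx ⊢
    have hT0 : ‖T 0‖ ≤ 1 := by
      simp only [T, pseval_zero, zero_sub, norm_neg, norm_mul, norm_inv]
      exact inv_mul_le_one_of_le₀ h0 (norm_nonneg _)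
    have hTx : ‖T x - T 0‖ ≤ 1 := by
      refine (hT_lip x 0 hx (by simp)).trans ?_
      rw [sub_zero]
      exact mul_le_one₀ hκ.le (norm_nonneg _) hx
    simpa using (IsUltrametricDist.norm_add_le_max (T x - T 0) (T 0)).trans (max_le hTx hT0)
  have hT_contr : ContractingWith κ (hT_maps.restrict T _ _) :=
    ⟨hκ, (LipschitzOnWith.of_dist_le_mul fun x hx y hy => by
      simpa only [dist_eq_norm] using
        hT_lip x y (mem_closedBall_zero_iff.1 hx) (mem_closedBall_zero_iff.1 hy)).mapsToRestrict
      hT_maps⟩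
  obtain ⟨d, hd, hfix, -⟩ := hT_contr.exists_fixedPoint' isClosed_closedBall.isComplete hT_maps
    (mem_closedBall_self zero_le_one) (edist_ne_top _ _)
  refine ⟨d, mem_closedBall_zero_iff.1 hd, ?_⟩
  simpa [T, Function.IsFixedPt, hsp.1] using hfix

end

end VdC

open VdC in
/-- Let `f = Σ aᵢ xⁱ ∈ K⦃x⦄` be SP.  Then `f` has a zero in `O_K` if
and only if `|a₀| ≤ |f|_SP = |a₁|`. -/
theorem statement3 {K : Type*} [NontriviallyNormedField K] (q : ℕ)
    (hK : IsLocalField K q) (a : ℕ → K) (ha : IsConvergent a) (hsp : IsSP a) :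
    (∃ d : K, ‖d‖ ≤ 1 ∧ pseval a d = 0) ↔ ‖a 0‖ ≤ ‖a 1‖ := by
  have : IsUltrametricDist K :=
    IsUltrametricDist.isUltrametricDist_of_isNonarchimedean_norm hK.nonarch
  have : CompleteSpace K := hK.complete
  exact ⟨fun ⟨d, hd, hfd⟩ => hsp.norm_coeff_zero_le_of_pseval_eq_zero ha hd hfd,
    hsp.exists_pseval_eq_zero ha⟩
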